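/- arXiv:1912.00896 — 3 statements merged into one kernel-verified Lean document; each statement's English description precedes it below -/
import Mathlib

section
/- Generator estimate for the Euler nonlinearity: Let d ≥ 2 and let u : ℤ^d → ℂ^d be a family of vectors (the Fourier coefficients of a vector field u on 𝕋^d), such that ∑_α e^{z|α|}|u_α| < ∞ and ∑_α |α| e^{z|α|}|u_α| < ∞ for some z ≥ 0, where |u_α| is the Euclidean norm on ℂ^d. For α ∈ ℤ^d, α ≠ 0, let ℙ_α be the d×d matrix with entries (ℙ_α)_{jk} = δ_{jk} − α_j α_k / |α|² (the Leray projector in Fourier variables), and ℙ₀ = Id. Then the Fourier coefficients w_α = ℙ_α ∑_{β∈ℤ^d} (u_β · i(α−β)) u_{α−β} of the Leray-projected nonlinearity ℙ(u·∇u) satisfy ∑_{α∈ℤ^d} e^{z|α|} |w_α| ≤ (∑_{β∈ℤ^d} e^{z|β|} |u_β|) · (∑_{γ∈ℤ^d} |γ| e^{z|γ|} |u_γ|), i.e. Gen[ℙ(u·∇u)](z) ≤ Gen[u](z) · ∂_z Gen[u](z). -/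
open scoped ENNReal

/-- Euclidean norm of a lattice point `α ∈ ℤ^d`. -/
noncomputable def anorm {d : ℕ} (α : Fin d → ℤ) : ℝ :=
  Real.sqrt (∑ i, ((α i : ℝ)) ^ 2)

/-- Euclidean norm of a vector in `ℂ^d`. -/
noncomputable def cnorm {d : ℕ} (v : Fin d → ℂ) : ℝ :=
  Real.sqrt (∑ j, ‖v j‖ ^ 2)

/-- The Leray projector in Fourier variables: for `α ≠ 0` the matrix with
entries `δ_{jk} − α_j α_k / |α|²`, and the identity for `α = 0`. -/
noncomputable def leray {d : ℕ} (α : Fin d → ℤ) : Matrix (Fin d) (Fin d) ℂ :=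
  if α = 0 then 1 else
    Matrix.of fun j k =>
      (if j = k then 1 else 0) - (α j : ℂ) * (α k : ℂ) / (∑ i, (α i : ℂ) ^ 2)


/-!
For `α ≠ 0` the Leray projector `ℙ_α` is the orthogonal projection onto `α^⊥`, hence a
contraction, and `|u_β · (α - β)| ≤ |u_β| |α - β|` by Cauchy–Schwarz. Since
`|α| ≤ |β| + |α - β|` and `z ≥ 0`, the weight `e^{z|α|}` splits as `e^{z|β|} e^{z|α-β|}`, so
`e^{z|α|} |w_α|` is bounded by a convolution of the summands of `Gen[u]` and `∂_z Gen[u]`, and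
summing over `α` factors the double sum. All estimates are made in `ℝ≥0∞`, where
`‖∑' f‖ₑ ≤ ∑' ‖f‖ₑ` needs no summability; the real series only reappear at the very end.
-/

open scoped InnerProductSpace

section Projection

variable {𝕜 E : Type*} [RCLike 𝕜] [NormedAddCommGroup E] [InnerProductSpace 𝕜 E]

theorem norm_sub_inner_div_smul_le (v w : E) :
    ‖w - (⟪v, w⟫_𝕜 / ((‖v‖ ^ 2 : ℝ) : 𝕜)) • v‖ ≤ ‖w‖ := by
  rw [← Submodule.starProjection_singleton, ← Submodule.starProjection_orthogonal_val]
  exact Submodule.norm_starProjection_apply_le _ w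

end Projection

theorem ENNReal.tsum_tsum_mul_sub {G : Type*} [AddGroup G] (f g : G → ℝ≥0∞) :
    ∑' α, ∑' β, f β * g (α - β) = (∑' β, f β) * ∑' γ, g γ := by
  rw [ENNReal.tsum_comm, ← ENNReal.tsum_mul_right]
  refine tsum_congr fun β => ?_
  rw [ENNReal.tsum_mul_left]
  exact congrArg _ ((Equiv.subRight β).tsum_eq g)

variable {d : ℕ}

theorem cnorm_eq_norm (v : Fin d → ℂ) : cnorm v = ‖WithLp.toLp 2 v‖ := by
  simp [cnorm, EuclideanSpace.norm_eq]

theorem anorm_nonneg (α : Fin d → ℤ) : 0 ≤ anorm α := Real.sqrt_nonneg _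

theorem cnorm_nonneg (v : Fin d → ℂ) : 0 ≤ cnorm v := Real.sqrt_nonneg _

theorem cnorm_smul (c : ℂ) (v : Fin d → ℂ) : cnorm (c • v) = ‖c‖ * cnorm v := by
  rw [cnorm_eq_norm, cnorm_eq_norm, WithLp.toLp_smul, norm_smul]

-- Viewed in `ℂ^d`, `ℙ_α` and the symbol `u_β · (α - β)` become inner-product expressions.
noncomputable def latticeVec (α : Fin d → ℤ) : EuclideanSpace ℂ (Fin d) :=
  WithLp.toLp 2 fun i => (α i : ℂ)

theorem anorm_eq_norm_latticeVec (α : Fin d → ℤ) : anorm α = ‖latticeVec α‖ := by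
  simp [anorm, latticeVec, EuclideanSpace.norm_eq]

theorem latticeVec_sub (α β : Fin d → ℤ) : latticeVec (α - β) = latticeVec α - latticeVec β := by
  ext i; simp [latticeVec]

theorem anorm_le_add_anorm_sub (α β : Fin d → ℤ) : anorm α ≤ anorm β + anorm (α - β) := by
  simp only [anorm_eq_norm_latticeVec, latticeVec_sub]
  exact norm_le_norm_add_norm_sub' _ _

theorem exp_mul_anorm_le {z : ℝ} (hz : 0 ≤ z) (α β : Fin d → ℤ) :
    Real.exp (z * anorm α) ≤ Real.exp (z * anorm β) * Real.exp (z * anorm (α - β)) := by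
  rw [← Real.exp_add, ← mul_add]
  gcongr
  exact anorm_le_add_anorm_sub α β

theorem norm_sum_mul_I_mul_sub_le (w : Fin d → ℂ) (α β : Fin d → ℤ) :
    ‖∑ j, w j * (Complex.I * ((α j : ℂ) - β j))‖ ≤ cnorm w * anorm (α - β) := by
  have hinner : ∑ j, w j * (Complex.I * ((α j : ℂ) - β j)) =
      Complex.I * ⟪latticeVec (α - β), WithLp.toLp 2 w⟫_ℂ := by
    simp only [latticeVec, PiLp.inner_apply, Finset.mul_sum]
    refine Finset.sum_congr rfl fun j _ => ?_
    simp only [Pi.sub_apply, Int.cast_sub, RCLike.inner_apply, map_sub, map_intCast]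
    ring
  rw [hinner, norm_mul, Complex.norm_I, one_mul, cnorm_eq_norm, anorm_eq_norm_latticeVec, mul_comm]
  exact norm_inner_le_norm _ _

theorem leray_mulVec_of_ne_zero {α : Fin d → ℤ} (hα : α ≠ 0) (v : Fin d → ℂ) :
    WithLp.toLp 2 ((leray α).mulVec v) = WithLp.toLp 2 v -
      (⟪latticeVec α, WithLp.toLp 2 v⟫_ℂ / ((‖latticeVec α‖ ^ 2 : ℝ) : ℂ)) • latticeVec α := by
  have hnorm : ((‖latticeVec α‖ ^ 2 : ℝ) : ℂ) = ∑ i, (α i : ℂ) ^ 2 := by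
    simp [latticeVec, EuclideanSpace.norm_sq_eq]
  ext j
  rw [hnorm]
  simp only [Matrix.mulVec, dotProduct, leray, hα, ↓reduceIte, Matrix.of_apply, sub_mul, ite_mul,
    one_mul, zero_mul, Finset.sum_sub_distrib, Finset.sum_ite_eq, Finset.mem_univ, latticeVec,
    PiLp.inner_apply, RCLike.inner_apply, map_intCast, Finset.sum_div, PiLp.sub_apply,
    PiLp.smul_apply, smul_eq_mul, sub_right_inj]
  rw [Finset.sum_mul]
  exact Finset.sum_congr rfl fun k _ => by ring

theorem cnorm_leray_mulVec_le (α : Fin d → ℤ) (v : Fin d → ℂ) :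
    cnorm ((leray α).mulVec v) ≤ cnorm v := by
  rcases eq_or_ne α 0 with rfl | hα
  · simp [leray]
  · rw [cnorm_eq_norm, cnorm_eq_norm, leray_mulVec_of_ne_zero hα]
    exact norm_sub_inner_div_smul_le _ _

theorem ofReal_cnorm_tsum_le {ι : Type*} (f : ι → Fin d → ℂ) :
    ENNReal.ofReal (cnorm (∑' i, f i)) ≤ ∑' i, ENNReal.ofReal (cnorm (f i)) := by
  have hmap : WithLp.toLp 2 (∑' i, f i) = ∑' i, WithLp.toLp 2 (f i) :=
    (PiLp.continuousLinearEquiv 2 ℂ fun _ : Fin d => ℂ).symm.map_tsum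
  simp only [cnorm_eq_norm, ofReal_norm, hmap]
  exact enorm_tsum_le_tsum_enorm

noncomputable def convectionSummand (u : (Fin d → ℤ) → Fin d → ℂ) (α β : Fin d → ℤ) :
    Fin d → ℂ :=
  (∑ j, u β j * (Complex.I * ((α j : ℂ) - (β j : ℂ)))) • u (α - β)

noncomputable def convectionCoeff (u : (Fin d → ℤ) → Fin d → ℂ) (α : Fin d → ℤ) : Fin d → ℂ :=
  ∑' β, convectionSummand u α β

theorem exp_mul_cnorm_convectionSummand_le {z : ℝ} (hz : 0 ≤ z)
    (u : (Fin d → ℤ) → Fin d → ℂ) (α β : Fin d → ℤ) :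
    Real.exp (z * anorm α) * cnorm (convectionSummand u α β) ≤
      Real.exp (z * anorm β) * cnorm (u β) *
        (anorm (α - β) * Real.exp (z * anorm (α - β)) * cnorm (u (α - β))) := by
  rw [convectionSummand, cnorm_smul]
  calc _ ≤ Real.exp (z * anorm β) * Real.exp (z * anorm (α - β)) *
        (cnorm (u β) * anorm (α - β) * cnorm (u (α - β))) := by
        have := cnorm_nonneg (u (α - β))
        gcongr
        · exact exp_mul_anorm_le hz α β
        · exact norm_sum_mul_I_mul_sub_le (u β) α β
    _ = _ := by ring

theorem ofReal_exp_mul_cnorm_convectionCoeff_le {z : ℝ} (hz : 0 ≤ z)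
    (u : (Fin d → ℤ) → Fin d → ℂ) (α : Fin d → ℤ) :
    ENNReal.ofReal (Real.exp (z * anorm α) * cnorm (convectionCoeff u α)) ≤
      ∑' β, ENNReal.ofReal (Real.exp (z * anorm β) * cnorm (u β)) *
        ENNReal.ofReal (anorm (α - β) * Real.exp (z * anorm (α - β)) * cnorm (u (α - β))) := by
  have hexp := (Real.exp_pos (z * anorm α)).le
  calc _ ≤ ENNReal.ofReal (Real.exp (z * anorm α)) *
        ∑' β, ENNReal.ofReal (cnorm (convectionSummand u α β)) := by
        rw [ENNReal.ofReal_mul hexp]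
        gcongr
        exact ofReal_cnorm_tsum_le _
    _ = ∑' β, ENNReal.ofReal (Real.exp (z * anorm α) * cnorm (convectionSummand u α β)) := by
        rw [← ENNReal.tsum_mul_left]
        simp_rw [ENNReal.ofReal_mul hexp]
    _ ≤ _ := ENNReal.tsum_le_tsum fun β => by
        rw [← ENNReal.ofReal_mul (mul_nonneg (Real.exp_pos _).le (cnorm_nonneg _))]
        exact ENNReal.ofReal_le_ofReal (exp_mul_cnorm_convectionSummand_le hz u α β)

theorem gen_euler_nonlinearity_le_general {d : ℕ}
    (u : (Fin d → ℤ) → (Fin d → ℂ)) (z : ℝ) (hz : 0 ≤ z)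
    (h1 : Summable fun α : Fin d → ℤ => Real.exp (z * anorm α) * cnorm (u α))
    (h2 : Summable fun α : Fin d → ℤ =>
      anorm α * Real.exp (z * anorm α) * cnorm (u α)) :
    ∑' α : Fin d → ℤ,
        ENNReal.ofReal (Real.exp (z * anorm α) *
          cnorm ((leray α).mulVec
            (∑' β : Fin d → ℤ,
              (∑ j, u β j * (Complex.I * ((α j : ℂ) - (β j : ℂ)))) • u (α - β))))
      ≤ ENNReal.ofReal
          ((∑' β : Fin d → ℤ, Real.exp (z * anorm β) * cnorm (u β)) *
           (∑' γ : Fin d → ℤ, anorm γ * Real.exp (z * anorm γ) * cnorm (u γ))) := by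
  set F : (Fin d → ℤ) → ℝ≥0∞ := fun β => ENNReal.ofReal (Real.exp (z * anorm β) * cnorm (u β))
  set G : (Fin d → ℤ) → ℝ≥0∞ := fun γ =>
    ENNReal.ofReal (anorm γ * Real.exp (z * anorm γ) * cnorm (u γ))
  have hF β := mul_nonneg (Real.exp_pos (z * anorm β)).le (cnorm_nonneg (u β))
  have hG γ := mul_nonneg (mul_nonneg (anorm_nonneg γ) (Real.exp_pos (z * anorm γ)).le)
    (cnorm_nonneg (u γ))
  calc _ ≤ ∑' α, ∑' β, F β * G (α - β) := ENNReal.tsum_le_tsum fun α =>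
          (ENNReal.ofReal_le_ofReal (mul_le_mul_of_nonneg_left
            (cnorm_leray_mulVec_le α (convectionCoeff u α)) (Real.exp_pos _).le)).trans
          (ofReal_exp_mul_cnorm_convectionCoeff_le hz u α)
    _ = (∑' β, F β) * ∑' γ, G γ := ENNReal.tsum_tsum_mul_sub F G
    _ = _ := by
      rw [ENNReal.ofReal_mul (tsum_nonneg hF), ENNReal.ofReal_tsum_of_nonneg hF h1,
        ENNReal.ofReal_tsum_of_nonneg hG h2]

/-- Generator estimate for the Euler nonlinearity: the Fourier coefficients
`w_α = ℙ_α ∑_β (u_β · i(α−β)) u_{α−β}` of the Leray-projected nonlinearity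
`ℙ(u·∇u)` satisfy `Gen[ℙ(u·∇u)](z) ≤ Gen[u](z) · ∂_z Gen[u](z)`. -/
theorem gen_euler_nonlinearity_le {d : ℕ} (hd : 2 ≤ d)
    (u : (Fin d → ℤ) → (Fin d → ℂ)) (z : ℝ) (hz : 0 ≤ z)
    (h1 : Summable fun α : Fin d → ℤ => Real.exp (z * anorm α) * cnorm (u α))
    (h2 : Summable fun α : Fin d → ℤ =>
      anorm α * Real.exp (z * anorm α) * cnorm (u α)) :
    ∑' α : Fin d → ℤ,
        ENNReal.ofReal (Real.exp (z * anorm α) *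
          cnorm ((leray α).mulVec
            (∑' β : Fin d → ℤ,
              (∑ j, u β j * (Complex.I * ((α j : ℂ) - (β j : ℂ)))) • u (α - β))))
      ≤ ENNReal.ofReal
          ((∑' β : Fin d → ℤ, Real.exp (z * anorm β) * cnorm (u β)) *
           (∑' γ : Fin d → ℤ, anorm γ * Real.exp (z * anorm γ) * cnorm (u γ))) :=
  gen_euler_nonlinearity_le_general u z hz h1 h2
end

section
/- Submultiplicativity of the weighted generator function on 𝕋 × [−1,1] (key computation in the proof of Theorem 4.1): Let f, g : 𝕋 × [−1, 1] → ℂ be smooth functions with Fourier coefficients f_α(y), g_α(y) (α ∈ ℤ) in the x-variable, and let z ≥ 0. Define Gen[f](z) = ∑_{α∈ℤ} ∑_{β≥0} e^{z|α|} ‖∂_y^β f_α‖_{L^∞([−1,1])} z^β / β!, and similarly for g and for the product fg, whose Fourier coefficients are (fg)_α(y) = ∑_{α'∈ℤ} f_{α'}(y) g_{α−α'}(y). If Gen[f](z) < ∞ and Gen[g](z) < ∞, then Gen[fg](z) ≤ Gen[f](z) · Gen[g](z). -/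
open scoped ENNReal

/-- Sup norm over `[−1, 1]` of (the modulus of) a function `ℝ → ℂ`. -/
noncomputable def supIcc (g : ℝ → ℂ) : ℝ :=
  sSup ((fun y => ‖g y‖) '' Set.Icc (-1 : ℝ) 1)

/-- Weighted generator function on `𝕋 × [−1,1]` of a family of Fourier
coefficients `f_α(y)` (`α ∈ ℤ`):
`Gen[f](z) = ∑_{α∈ℤ} ∑_{β≥0} e^{z|α|} ‖∂_y^β f_α‖_{L^∞([−1,1])} z^β / β!`. -/
noncomputable def GenW (f : ℤ → ℝ → ℂ) (z : ℝ) : ℝ≥0∞ :=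
  ∑' (α : ℤ) (β : ℕ),
    ENNReal.ofReal (Real.exp (z * |(α : ℝ)|) *
      supIcc (iteratedDeriv β (f α)) * z ^ β / (Nat.factorial β))

lemma supIcc_eq_norm (φ : ℝ → ℂ) :
    supIcc φ = sSup ((fun y => ‖φ y‖) '' Set.Icc (-1 : ℝ) 1) := rfl

lemma supIcc_nonneg (φ : ℝ → ℂ) : 0 ≤ supIcc φ := by
  refine Real.sSup_nonneg ?_
  rintro x ⟨y, _, rfl⟩
  exact norm_nonneg _

lemma norm_le_supIcc (φ : ℝ → ℂ) (hφ : Continuous φ) {y : ℝ}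
    (hy : y ∈ Set.Icc (-1 : ℝ) 1) : ‖φ y‖ ≤ supIcc φ := by
  rw [supIcc_eq_norm]
  refine le_csSup ?_ ⟨y, hy, rfl⟩
  exact (isCompact_Icc.image (by fun_prop : Continuous fun y => ‖φ y‖)).bddAbove

lemma supIcc_le {φ : ℝ → ℂ} {M : ℝ} (hM : 0 ≤ M)
    (h : ∀ y ∈ Set.Icc (-1 : ℝ) 1, ‖φ y‖ ≤ M) : supIcc φ ≤ M := by
  rw [supIcc_eq_norm]
  refine Real.sSup_le ?_ hM
  rintro x ⟨y, hy, rfl⟩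
  exact h y hy

/-- Bound on `deriv` at any point of `Icc (-1) 1` knowing differentiability and
derivative bounds only on the open interval. -/
lemma deriv_norm_le_of_bound {φ : ℝ → ℂ} {M : ℝ} (hM : 0 ≤ M)
    (hdiff : ∀ x ∈ Set.Ioo (-1 : ℝ) 1, DifferentiableAt ℝ φ x)
    (hbd : ∀ x ∈ Set.Ioo (-1 : ℝ) 1, ‖deriv φ x‖ ≤ M)
    {a : ℝ} (ha : a ∈ Set.Icc (-1 : ℝ) 1) : ‖deriv φ a‖ ≤ M := by
  by_cases hao : a ∈ Set.Ioo (-1 : ℝ) 1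
  · exact hbd a hao
  by_cases hd : DifferentiableAt ℝ φ a
  swap
  · rw [deriv_zero_of_not_differentiableAt hd]; simpa using hM
  have hda : HasDerivAt φ (deriv φ a) a := hd.hasDerivAt
  -- Lipschitz bound on the open interval
  have lip : ∀ x ∈ Set.Ioo (-1 : ℝ) 1, ∀ x' ∈ Set.Ioo (-1 : ℝ) 1,
      ‖φ x - φ x'‖ ≤ M * ‖x - x'‖ := by
    intro x hx x' hx'
    exact Convex.norm_image_sub_le_of_norm_hasDerivWithin_le
      (fun t ht => ((hdiff t ht).hasDerivAt).hasDerivWithinAt) hbd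
      (convex_Ioo _ _) hx' hx
  have hne : (nhdsWithin a (Set.Ioo (-1 : ℝ) 1)).NeBot := by
    refine mem_closure_iff_nhdsWithin_neBot.mp ?_
    rw [closure_Ioo (by norm_num : (-1 : ℝ) ≠ 1)]
    exact ha
  -- Lipschitz bound up to the endpoint
  have lipa : ∀ x ∈ Set.Ioo (-1 : ℝ) 1, ‖φ x - φ a‖ ≤ M * ‖x - a‖ := by
    intro x hx
    have hφa : Filter.Tendsto φ (nhdsWithin a (Set.Ioo (-1 : ℝ) 1)) (nhds (φ a)) :=
      (hda.continuousAt.tendsto).mono_left nhdsWithin_le_nhds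
    have h1 : Filter.Tendsto (fun x' => ‖φ x - φ x'‖)
        (nhdsWithin a (Set.Ioo (-1 : ℝ) 1)) (nhds ‖φ x - φ a‖) :=
      ((tendsto_const_nhds.sub hφa).norm)
    have h2 : Filter.Tendsto (fun x' => M * ‖x - x'‖)
        (nhdsWithin a (Set.Ioo (-1 : ℝ) 1)) (nhds (M * ‖x - a‖)) := by
      exact (tendsto_const_nhds.mul
        ((tendsto_const_nhds.sub (Filter.tendsto_id.mono_left nhdsWithin_le_nhds)).norm))
    refine le_of_tendsto_of_tendsto h1 h2 ?_
    filter_upwards [self_mem_nhdsWithin] with x' hx'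
    exact lip x hx x' hx'
  -- slope bound
  have hslope : Filter.Tendsto (slope φ a) (nhdsWithin a (Set.Ioo (-1 : ℝ) 1))
      (nhds (deriv φ a)) := by
    refine (hasDerivAt_iff_tendsto_slope.mp hda).mono_left ?_
    refine nhdsWithin_mono a ?_
    intro x hx
    simp only [Set.mem_compl_iff, Set.mem_singleton_iff]
    exact fun h => hao (h ▸ hx)
  refine le_of_tendsto hslope.norm ?_
  filter_upwards [self_mem_nhdsWithin] with x hx
  have hxa : x ≠ a := fun h => hao (h ▸ hx)
  have hxa' : x - a ≠ 0 := sub_ne_zero.mpr hxa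
  rw [slope_def_module]
  rw [norm_smul]
  have : ‖(x - a)⁻¹‖ = ‖x - a‖⁻¹ := by
    rw [norm_inv]
  rw [this]
  rw [inv_mul_le_iff₀ (by simpa [sub_ne_zero] using hxa : (0:ℝ) < ‖x - a‖)]
  calc ‖φ x - φ a‖ ≤ M * ‖x - a‖ := lipa x hx
    _ = ‖x - a‖ * M := mul_comm _ _

/-- Key analytic lemma: termwise bound for iterated derivatives of a series of
functions with summable derivative bounds on `[-1,1]`. -/
lemma tsum_iteratedDeriv_bound (F : ℤ → ℝ → ℂ) (hF : ∀ α, ContDiff ℝ (⊤ : ℕ∞) (F α))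
    (u : ℕ → ℤ → ℝ) (β : ℕ) (hu : ∀ k ≤ β, Summable (u k))
    (hb : ∀ k (α : ℤ) y, y ∈ Set.Icc (-1 : ℝ) 1 → ‖iteratedDeriv k (F α) y‖ ≤ u k α)
    {y : ℝ} (hy : y ∈ Set.Icc (-1 : ℝ) 1) :
    ‖iteratedDeriv β (fun t => ∑' α, F α t) y‖ ≤ ∑' α, u β α := by
  have h0Icc : (0 : ℝ) ∈ Set.Icc (-1 : ℝ) 1 := by norm_num
  have h0Ioo : (0 : ℝ) ∈ Set.Ioo (-1 : ℝ) 1 := by norm_num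
  have hsub : Set.Ioo (-1 : ℝ) 1 ⊆ Set.Icc (-1 : ℝ) 1 := Set.Ioo_subset_Icc_self
  have hu0 : ∀ k ≤ β, ∀ t ∈ Set.Icc (-1 : ℝ) 1,
      Summable (fun α => iteratedDeriv k (F α) t) := by
    intro k hk t ht
    exact (hu k hk).of_norm_bounded (fun α => hb k α t ht)
  have hder : ∀ k (α : ℤ) (t : ℝ),
      HasDerivAt (iteratedDeriv k (F α)) (iteratedDeriv (k + 1) (F α) t) t := by
    intro k α t
    have h1 : DifferentiableAt ℝ (iteratedDeriv k (F α)) t :=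
      (ContDiff.differentiable_iteratedDeriv k (hF α)
        (by exact_mod_cast lt_top_iff_ne_top.mpr (by simp))) t
    rw [iteratedDeriv_succ]
    exact h1.hasDerivAt
  have hopen : IsOpen (Set.Ioo (-1 : ℝ) 1) := isOpen_Ioo
  have hconn : IsPreconnected (Set.Ioo (-1 : ℝ) 1) := (convex_Ioo _ _).isPreconnected
  -- termwise identity on the open interval
  have interior : ∀ k, k ≤ β → ∀ t ∈ Set.Ioo (-1 : ℝ) 1,
      iteratedDeriv k (fun s => ∑' α, F α s) t = ∑' α, iteratedDeriv k (F α) t := by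
    intro k
    induction k with
    | zero => intro _ t _; simp [iteratedDeriv_zero]
    | succ k ih =>
      intro hk t ht
      have ihh := ih (le_trans (Nat.le_succ k) hk)
      have HD : ∀ x ∈ Set.Ioo (-1 : ℝ) 1,
          HasDerivAt (fun s => ∑' α, iteratedDeriv k (F α) s)
            (∑' α, iteratedDeriv (k + 1) (F α) x) x := by
        intro x hx
        exact hasDerivAt_tsum_of_isPreconnected (hu (k + 1) hk) hopen hconn
          (fun α t _ => hder k α t)
          (fun α t ht' => hb (k + 1) α t (hsub ht'))
          h0Ioo (hu0 k (le_trans (Nat.le_succ k) hk) 0 h0Icc) hx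
      rw [iteratedDeriv_succ]
      have hEq : (iteratedDeriv k (fun s => ∑' α, F α s)) =ᶠ[nhds t]
          (fun s => ∑' α, iteratedDeriv k (F α) s) := by
        filter_upwards [hopen.mem_nhds ht] with s hs
        exact ihh s hs
      rw [Filter.EventuallyEq.deriv_eq hEq, (HD t ht).deriv]
  -- bound on the open interval
  have hIoo : ∀ k, k ≤ β → ∀ t ∈ Set.Ioo (-1 : ℝ) 1,
      ‖iteratedDeriv k (fun s => ∑' α, F α s) t‖ ≤ ∑' α, u k α := by
    intro k hk t ht
    rw [interior k hk t ht]
    have hsumn : Summable (fun α => ‖iteratedDeriv k (F α) t‖) :=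
      (hu k hk).of_nonneg_of_le (fun α => norm_nonneg _) (fun α => hb k α t (hsub ht))
    calc ‖∑' α, iteratedDeriv k (F α) t‖ ≤ ∑' α, ‖iteratedDeriv k (F α) t‖ :=
          norm_tsum_le_tsum_norm hsumn
      _ ≤ ∑' α, u k α := Summable.tsum_le_tsum (fun α => hb k α t (hsub ht)) hsumn (hu k hk)
  by_cases hyo : y ∈ Set.Ioo (-1 : ℝ) 1
  · exact hIoo β le_rfl y hyo
  · have hM : 0 ≤ ∑' α, u β α :=
      tsum_nonneg (fun α => le_trans (norm_nonneg _) (hb β α y hy))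
    cases β with
    | zero =>
      simp only [iteratedDeriv_zero]
      have hsum : Summable (fun α => F α y) := by
        simpa [iteratedDeriv_zero] using hu0 0 (Nat.zero_le _) y hy
      have hsumn : Summable (fun α => ‖F α y‖) :=
        (hu 0 (Nat.zero_le _)).of_nonneg_of_le (fun α => norm_nonneg _)
          (fun α => by simpa [iteratedDeriv_zero] using hb 0 α y hy)
      calc ‖∑' α, F α y‖ ≤ ∑' α, ‖F α y‖ := norm_tsum_le_tsum_norm hsumn
        _ ≤ ∑' α, u 0 α := Summable.tsum_le_tsum
            (fun α => by simpa [iteratedDeriv_zero] using hb 0 α y hy) hsumn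
            (hu 0 (Nat.zero_le _))
    | succ k =>
      rw [iteratedDeriv_succ]
      refine deriv_norm_le_of_bound hM ?_ ?_ hy
      · intro x hx
        have HD : HasDerivAt (fun s => ∑' α, iteratedDeriv k (F α) s)
            (∑' α, iteratedDeriv (k + 1) (F α) x) x :=
          hasDerivAt_tsum_of_isPreconnected (hu (k + 1) le_rfl) hopen hconn
            (fun α t _ => hder k α t)
            (fun α t ht' => hb (k + 1) α t (hsub ht'))
            h0Ioo (hu0 k (Nat.le_succ k) 0 h0Icc) hx
        have hEq : (fun s => ∑' α, iteratedDeriv k (F α) s) =ᶠ[nhds x]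
            (iteratedDeriv k (fun s => ∑' α, F α s)) := by
          filter_upwards [hopen.mem_nhds hx] with s hs
          exact (interior k (Nat.le_succ k) s hs).symm
        exact (hEq.differentiableAt_iff).mp HD.differentiableAt
      · intro x hx
        rw [← iteratedDeriv_succ]
        exact hIoo (k + 1) le_rfl x hx

/-- Extraction of summability of sup norms of `k`-th derivatives from
finiteness of the generator function. -/
lemma summable_of_genW_ne_top (f : ℤ → ℝ → ℂ) (z : ℝ) (hz : 0 ≤ z)
    (hfin : GenW f z ≠ ⊤) (k : ℕ) (hk : 0 < z ∨ k = 0) :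
    Summable (fun α => supIcc (iteratedDeriv k (f α))) := by
  set c : ℝ := z ^ k / (Nat.factorial k) with hc
  have hcpos : 0 < c := by
    rcases hk with hk | rfl
    · positivity
    · simp [hc, Nat.factorial]
  have h1 : ∑' α : ℤ, ENNReal.ofReal (supIcc (iteratedDeriv k (f α)) * c) ≠ ⊤ := by
    refine ne_top_of_le_ne_top hfin ?_
    rw [GenW]
    refine Summable.tsum_le_tsum (fun α => ?_) ENNReal.summable ENNReal.summable
    refine le_trans ?_ (ENNReal.le_tsum k)
    refine ENNReal.ofReal_le_ofReal ?_
    have hexp : (1 : ℝ) ≤ Real.exp (z * |(α : ℝ)|) := by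
      rw [Real.one_le_exp_iff]
      positivity
    have hnn := supIcc_nonneg (iteratedDeriv k (f α))
    calc supIcc (iteratedDeriv k (f α)) * c
        = 1 * supIcc (iteratedDeriv k (f α)) * z ^ k / (Nat.factorial k) := by
          rw [hc]; ring
      _ ≤ Real.exp (z * |(α : ℝ)|) * supIcc (iteratedDeriv k (f α)) * z ^ k
            / (Nat.factorial k) := by gcongr <;> positivity
  have h2 : Summable (fun α : ℤ => supIcc (iteratedDeriv k (f α)) * c) := by
    have := ENNReal.summable_toReal h1
    refine this.congr (fun α => ?_)
    rw [ENNReal.toReal_ofReal (mul_nonneg (supIcc_nonneg _) hcpos.le)]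
  have h3 := h2.mul_right c⁻¹
  refine h3.congr (fun α => ?_)
  rw [mul_assoc, mul_inv_cancel₀ hcpos.ne', mul_one]


lemma tsum_antidiagonal_eq (T : ℕ × ℕ → ℝ≥0∞) :
    ∑' (β : ℕ), ∑ k ∈ Finset.range (β + 1), T (k, β - k) = ∑' p : ℕ × ℕ, T p := by
  calc ∑' (β : ℕ), ∑ k ∈ Finset.range (β + 1), T (k, β - k)
      = ∑' (β : ℕ), ∑ p ∈ Finset.HasAntidiagonal.antidiagonal β, T p :=
        tsum_congr fun β => (Finset.Nat.sum_antidiagonal_eq_sum_range_succ_mk T β).symm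
    _ = ∑' (β : ℕ), ∑' (p : (Finset.HasAntidiagonal.antidiagonal β : Finset (ℕ × ℕ))), T ↑p :=
        tsum_congr fun β => (Finset.tsum_subtype _ T).symm
    _ = ∑' (σ : Σ β : ℕ, (Finset.HasAntidiagonal.antidiagonal β : Finset (ℕ × ℕ))), T ↑σ.2 :=
        (ENNReal.tsum_sigma (fun β (p : (Finset.HasAntidiagonal.antidiagonal β : Finset (ℕ × ℕ))) => T ↑p)).symm
    _ = ∑' p : ℕ × ℕ, T p := Finset.HasAntidiagonal.sigmaAntidiagonalEquivProd.tsum_eq T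

/-- The generic summand of `GenW`. -/
noncomputable def genTerm (f : ℤ → ℝ → ℂ) (z : ℝ) (α : ℤ) (k : ℕ) : ℝ≥0∞ :=
  ENNReal.ofReal (Real.exp (z * |(α : ℝ)|) *
    supIcc (iteratedDeriv k (f α)) * z ^ k / (Nat.factorial k))

lemma genW_eq_tsum_genTerm (f : ℤ → ℝ → ℂ) (z : ℝ) :
    GenW f z = ∑' (α : ℤ) (k : ℕ), genTerm f z α k := rfl

/-- Submultiplicativity of the weighted generator function on `𝕋 × [−1,1]`
(key computation in the proof of Theorem 4.1): for smooth `f, g` with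
finite generators, the Fourier coefficients `(fg)_α(y) = ∑_{α'} f_{α'}(y)
g_{α−α'}(y)` of the product satisfy `Gen[fg](z) ≤ Gen[f](z) · Gen[g](z)`. -/
theorem genW_mul_le (f g : ℤ → ℝ → ℂ)
    (hf : ∀ α, ContDiff ℝ (⊤ : ℕ∞) (f α)) (hg : ∀ α, ContDiff ℝ (⊤ : ℕ∞) (g α))
    (z : ℝ) (hz : 0 ≤ z) (hfin : GenW f z ≠ ⊤) (hgfin : GenW g z ≠ ⊤) :
    GenW (fun α y => ∑' α' : ℤ, f α' y * g (α - α') y) z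
      ≤ GenW f z * GenW g z := by
  classical
  have hIoosub : Set.Ioo (-1 : ℝ) 1 ⊆ Set.Icc (-1 : ℝ) 1 := Set.Ioo_subset_Icc_self
  have hAfnn : ∀ (k : ℕ) (α : ℤ), 0 ≤ supIcc (iteratedDeriv k (f α)) :=
    fun k α => supIcc_nonneg _
  have hBgnn : ∀ (k : ℕ) (α : ℤ), 0 ≤ supIcc (iteratedDeriv k (g α)) :=
    fun k α => supIcc_nonneg _
  have hAfS : ∀ k, (0 < z ∨ k = 0) → Summable (fun α => supIcc (iteratedDeriv k (f α))) :=
    summable_of_genW_ne_top f z hz hfin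
  have hBgS : ∀ k, (0 < z ∨ k = 0) → Summable (fun α => supIcc (iteratedDeriv k (g α))) :=
    summable_of_genW_ne_top g z hz hgfin
  have hBg_le : ∀ j, (0 < z ∨ j = 0) → ∀ γ : ℤ,
      supIcc (iteratedDeriv j (g γ)) ≤ ∑' γ' : ℤ, supIcc (iteratedDeriv j (g γ')) :=
    fun j hj γ => Summable.le_tsum (hBgS j hj) γ (fun _ _ => hBgnn j _)
  -- the key per-term estimate
  have key : ∀ (α : ℤ) (β : ℕ),
      ENNReal.ofReal (Real.exp (z * |(α : ℝ)|) *
          supIcc (iteratedDeriv β (fun y => ∑' α' : ℤ, f α' y * g (α - α') y)) *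
          z ^ β / (Nat.factorial β))
        ≤ ∑' α' : ℤ, ∑ k ∈ Finset.range (β + 1),
            genTerm f z α' k * genTerm g z (α - α') (β - k) := by
    intro α β
    by_cases hcase : z = 0 ∧ β ≠ 0
    · obtain ⟨rfl, hβ⟩ := hcase
      have h0 : Real.exp (0 * |(α : ℝ)|) *
          supIcc (iteratedDeriv β (fun y => ∑' α' : ℤ, f α' y * g (α - α') y)) *
          (0 : ℝ) ^ β / (Nat.factorial β) = 0 := by
        rw [zero_pow hβ]; ring
      rw [h0, ENNReal.ofReal_zero]
      exact zero_le
    · have hpos : 0 < z ∨ β = 0 := by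
        rcases hz.lt_or_eq with h | h
        · exact Or.inl h
        · push_neg at hcase
          exact Or.inr (hcase h.symm)
      have hposk : ∀ k, k ≤ β → (0 < z ∨ k = 0) :=
        fun k hk => hpos.imp id (fun hβ0 => by omega)
      -- the derivative bounds for the products
      set u : ℕ → ℤ → ℝ := fun m α' => ∑ k ∈ Finset.range (m + 1),
        (m.choose k : ℝ) * supIcc (iteratedDeriv k (f α')) *
          supIcc (iteratedDeriv (m - k) (g (α - α'))) with hudef
      have hunn : ∀ m α', 0 ≤ u m α' := by
        intro m α'
        refine Finset.sum_nonneg fun k _ => ?_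
        exact mul_nonneg (mul_nonneg (Nat.cast_nonneg _) (hAfnn _ _)) (hBgnn _ _)
      have hb : ∀ (m : ℕ) (α' : ℤ) (y : ℝ), y ∈ Set.Icc (-1 : ℝ) 1 →
          ‖iteratedDeriv m (fun t => f α' t * g (α - α') t) y‖ ≤ u m α' := by
        intro m α' y hy
        have h1 : ‖iteratedDeriv m (fun t => f α' t * g (α - α') t) y‖
            = ‖iteratedFDeriv ℝ m (fun t => f α' t * g (α - α') t) y‖ :=
          (norm_iteratedFDeriv_eq_norm_iteratedDeriv).symm
        rw [h1]
        refine le_trans (norm_iteratedFDeriv_mul_le (hf α') (hg (α - α')) y (by exact_mod_cast le_top)) ?_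
        rw [hudef]
        refine Finset.sum_le_sum fun k hk => ?_
        rw [norm_iteratedFDeriv_eq_norm_iteratedDeriv,
          norm_iteratedFDeriv_eq_norm_iteratedDeriv]
        have hf1 : ‖iteratedDeriv k (f α') y‖ ≤ supIcc (iteratedDeriv k (f α')) :=
          norm_le_supIcc _ ((hf α').continuous_iteratedDeriv k (by exact_mod_cast le_top)) hy
        have hg1 : ‖iteratedDeriv (m - k) (g (α - α')) y‖
            ≤ supIcc (iteratedDeriv (m - k) (g (α - α'))) :=
          norm_le_supIcc _ ((hg (α - α')).continuous_iteratedDeriv (m - k) (by exact (WithTop.coe_le_coe.mpr (le_top : ((m - k : ℕ) : ℕ∞) ≤ ⊤) :))) hy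
        exact mul_le_mul (mul_le_mul_of_nonneg_left hf1 (Nat.cast_nonneg _)) hg1
          (norm_nonneg _) (mul_nonneg (Nat.cast_nonneg _) (hAfnn _ _))
      have hu : ∀ m, m ≤ β → Summable (u m) := by
        intro m hm
        rw [hudef]
        refine summable_sum fun k hk => ?_
        have hk' : k ≤ m := Nat.lt_succ_iff.mp (Finset.mem_range.mp hk)
        have hz1 := hposk k (hk'.trans hm)
        have hz2 := hposk (m - k) ((Nat.sub_le m k).trans hm)
        refine Summable.of_nonneg_of_le
          (fun α' => mul_nonneg (mul_nonneg (Nat.cast_nonneg _) (hAfnn _ _)) (hBgnn _ _))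
          (fun α' => ?_)
          (((hAfS k hz1).mul_left ((m.choose k : ℝ))).mul_right
            (∑' γ' : ℤ, supIcc (iteratedDeriv (m - k) (g γ'))))
        exact mul_le_mul_of_nonneg_left (hBg_le (m - k) hz2 (α - α'))
          (mul_nonneg (Nat.cast_nonneg _) (hAfnn _ _))
      have hT0 : 0 ≤ ∑' α' : ℤ, u β α' := tsum_nonneg fun α' => hunn β α'
      have hsupT : supIcc (iteratedDeriv β (fun y => ∑' α' : ℤ, f α' y * g (α - α') y))
          ≤ ∑' α' : ℤ, u β α' := by
        refine supIcc_le hT0 (fun y hy => ?_)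
        exact tsum_iteratedDeriv_bound (fun α' t => f α' t * g (α - α') t)
          (fun α' => (hf α').mul (hg (α - α'))) u β hu hb hy
      set E : ℝ := Real.exp (z * |(α : ℝ)|) with hEdef
      have hE : 0 < E := Real.exp_pos _
      have hC0 : 0 ≤ E * z ^ β / (Nat.factorial β) :=
        div_nonneg (mul_nonneg hE.le (pow_nonneg hz β)) (Nat.cast_nonneg _)
      calc ENNReal.ofReal (E *
              supIcc (iteratedDeriv β (fun y => ∑' α' : ℤ, f α' y * g (α - α') y)) *
              z ^ β / (Nat.factorial β))
          ≤ ENNReal.ofReal (E * (∑' α' : ℤ, u β α') * z ^ β / (Nat.factorial β)) := by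
            refine ENNReal.ofReal_le_ofReal ?_
            have hden : (0:ℝ) < (Nat.factorial β : ℝ) := by
              exact_mod_cast Nat.factorial_pos β
            exact div_le_div_of_nonneg_right (mul_le_mul_of_nonneg_right
                (mul_le_mul_of_nonneg_left hsupT hE.le) (pow_nonneg hz β)) hden.le
        _ = ENNReal.ofReal (∑' α' : ℤ, u β α' * (E * z ^ β / (Nat.factorial β))) := by
            congr 1
            rw [tsum_mul_right]
            ring
        _ = ∑' α' : ℤ, ENNReal.ofReal (u β α' * (E * z ^ β / (Nat.factorial β))) :=
            ENNReal.ofReal_tsum_of_nonneg (fun α' => mul_nonneg (hunn β α') hC0)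
              ((hu β le_rfl).mul_right _)
        _ ≤ ∑' α' : ℤ, ∑ k ∈ Finset.range (β + 1),
              genTerm f z α' k * genTerm g z (α - α') (β - k) := by
            refine Summable.tsum_le_tsum (fun α' => ?_) ENNReal.summable ENNReal.summable
            rw [hudef]
            rw [Finset.sum_mul, ENNReal.ofReal_sum_of_nonneg (fun k hk => by
              exact mul_nonneg (mul_nonneg (mul_nonneg (Nat.cast_nonneg _) (hAfnn _ _))
                (hBgnn _ _)) hC0)]
            refine Finset.sum_le_sum fun k hk => ?_
            have hkβ : k ≤ β := Nat.lt_succ_iff.mp (Finset.mem_range.mp hk)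
            have hCne : ((β.choose k : ℕ) : ℝ) ≠ 0 :=
              Nat.cast_ne_zero.mpr (Nat.choose_pos hkβ).ne'
            have hfact : (β.choose k : ℝ) * z ^ β / (Nat.factorial β)
                = (z ^ k / (Nat.factorial k)) * (z ^ (β - k) / (Nat.factorial (β - k))) := by
              rw [div_mul_div_comm, ← pow_add, Nat.add_sub_cancel' hkβ]
              rw [show ((Nat.factorial β : ℕ) : ℝ)
                  = (β.choose k : ℝ) * ((Nat.factorial k : ℝ) * (Nat.factorial (β - k) : ℝ)) by
                push_cast [← Nat.choose_mul_factorial_mul_factorial hkβ]; ring]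
              exact mul_div_mul_left _ _ hCne
            have hexp : E ≤ Real.exp (z * |(α' : ℝ)|) * Real.exp (z * |((α - α' : ℤ) : ℝ)|) := by
              rw [hEdef, ← Real.exp_add]
              refine Real.exp_le_exp.mpr ?_
              rw [← mul_add]
              refine mul_le_mul_of_nonneg_left ?_ hz
              push_cast
              calc |(α : ℝ)| = |(α' : ℝ) + ((α : ℝ) - (α' : ℝ))| :=
                    congrArg abs (by ring)
                _ ≤ |(α' : ℝ)| + |(α : ℝ) - (α' : ℝ)| := abs_add_le _ _
            rw [genTerm, genTerm, ← ENNReal.ofReal_mul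
              (div_nonneg (mul_nonneg (mul_nonneg (Real.exp_pos _).le (hAfnn k α'))
                (pow_nonneg hz k)) (Nat.cast_nonneg _))]
            refine ENNReal.ofReal_le_ofReal ?_
            calc ((β.choose k : ℝ) * supIcc (iteratedDeriv k (f α')) *
                    supIcc (iteratedDeriv (β - k) (g (α - α')))) *
                  (E * z ^ β / (Nat.factorial β))
                = ((β.choose k : ℝ) * z ^ β / (Nat.factorial β)) *
                  (E * (supIcc (iteratedDeriv k (f α')) *
                    supIcc (iteratedDeriv (β - k) (g (α - α'))))) := by ring
              _ = ((z ^ k / (Nat.factorial k)) * (z ^ (β - k) / (Nat.factorial (β - k)))) *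
                  (E * (supIcc (iteratedDeriv k (f α')) *
                    supIcc (iteratedDeriv (β - k) (g (α - α'))))) := by rw [hfact]
              _ ≤ ((z ^ k / (Nat.factorial k)) * (z ^ (β - k) / (Nat.factorial (β - k)))) *
                  ((Real.exp (z * |(α' : ℝ)|) * Real.exp (z * |((α - α' : ℤ) : ℝ)|)) *
                    (supIcc (iteratedDeriv k (f α')) *
                      supIcc (iteratedDeriv (β - k) (g (α - α'))))) := by
                  refine mul_le_mul_of_nonneg_left
                    (mul_le_mul_of_nonneg_right hexp
                      (mul_nonneg (hAfnn _ _) (hBgnn _ _)))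
                    (mul_nonneg (div_nonneg (pow_nonneg hz _) (Nat.cast_nonneg _))
                      (div_nonneg (pow_nonneg hz _) (Nat.cast_nonneg _)))
              _ = (Real.exp (z * |(α' : ℝ)|) * supIcc (iteratedDeriv k (f α')) *
                    z ^ k / (Nat.factorial k)) *
                  (Real.exp (z * |((α - α' : ℤ) : ℝ)|) *
                    supIcc (iteratedDeriv (β - k) (g (α - α'))) *
                    z ^ (β - k) / (Nat.factorial (β - k))) := by ring
  -- assemble
  have step1 : GenW (fun α y => ∑' α' : ℤ, f α' y * g (α - α') y) z
      ≤ ∑' (α : ℤ) (β : ℕ), ∑' α' : ℤ, ∑ k ∈ Finset.range (β + 1),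
          genTerm f z α' k * genTerm g z (α - α') (β - k) := by
    rw [GenW]
    exact Summable.tsum_le_tsum
      (fun α => Summable.tsum_le_tsum (fun β => key α β) ENNReal.summable ENNReal.summable)
      ENNReal.summable ENNReal.summable
  refine step1.trans_eq ?_
  calc ∑' (α : ℤ) (β : ℕ), ∑' α' : ℤ, ∑ k ∈ Finset.range (β + 1),
          genTerm f z α' k * genTerm g z (α - α') (β - k)
      = ∑' (α : ℤ) (α' : ℤ) (β : ℕ), ∑ k ∈ Finset.range (β + 1),
          genTerm f z α' k * genTerm g z (α - α') (β - k) :=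
        tsum_congr fun α => ENNReal.tsum_comm
    _ = ∑' (α' : ℤ) (α : ℤ) (β : ℕ), ∑ k ∈ Finset.range (β + 1),
          genTerm f z α' k * genTerm g z (α - α') (β - k) := ENNReal.tsum_comm
    _ = ∑' (α' : ℤ), (∑' k : ℕ, genTerm f z α' k) * GenW g z := by
        refine tsum_congr fun α' => ?_
        calc ∑' (α : ℤ) (β : ℕ), ∑ k ∈ Finset.range (β + 1),
                genTerm f z α' k * genTerm g z (α - α') (β - k)
            = ∑' (α : ℤ), ∑' p : ℕ × ℕ, genTerm f z α' p.1 * genTerm g z (α - α') p.2 :=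
              tsum_congr fun α => tsum_antidiagonal_eq
                (fun p => genTerm f z α' p.1 * genTerm g z (α - α') p.2)
          _ = ∑' (α : ℤ), (∑' k : ℕ, genTerm f z α' k) * ∑' m : ℕ, genTerm g z (α - α') m := by
              refine tsum_congr fun α => ?_
              rw [ENNReal.tsum_prod']
              calc ∑' (k : ℕ) (m : ℕ), genTerm f z α' k * genTerm g z (α - α') m
                  = ∑' (k : ℕ), genTerm f z α' k * ∑' m : ℕ, genTerm g z (α - α') m := by
                    exact tsum_congr fun k => ENNReal.tsum_mul_left
                _ = (∑' k : ℕ, genTerm f z α' k) * ∑' m : ℕ, genTerm g z (α - α') m := by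
                    rw [ENNReal.tsum_mul_right]
          _ = (∑' k : ℕ, genTerm f z α' k) *
                ∑' (α : ℤ), ∑' m : ℕ, genTerm g z (α - α') m := by
              rw [ENNReal.tsum_mul_left]
          _ = (∑' k : ℕ, genTerm f z α' k) * GenW g z := by
              congr 1
              rw [genW_eq_tsum_genTerm]
              exact (Equiv.subRight α').tsum_eq (fun t => ∑' m : ℕ, genTerm g z t m)
    _ = (∑' (α' : ℤ) (k : ℕ), genTerm f z α' k) * GenW g z := by
        rw [ENNReal.tsum_mul_right]
    _ = GenW f z * GenW g z := by rw [genW_eq_tsum_genTerm f z]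
end

section
/- Maximum principle for the transport differential inequality with outgoing characteristics (key step in the proof of Theorem 3.1): Let ρ, T > 0 and let G : [0, T] × [0, ρ] → ℝ be continuously differentiable with ∂_z G(t, z) ≥ 0 for all (t, z). Suppose there are continuous functions a, b : [0, T] × [0, ρ] → ℝ such that ∂_t G(t, z) ≤ a(t, z) + b(t, z) ∂_z G(t, z) for all (t, z), and b(t, ρ) ≤ 0 for all t ∈ [0, T] (outgoing characteristics at z = ρ). Then for every t ∈ [0, T], sup_{z∈[0,ρ]} G(t, z) ≤ sup_{z∈[0,ρ]} G(0, z) + ∫₀ᵗ (sup_{z∈[0,ρ]} a(s, z)) ds. -/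
open MeasureTheory

/-- Maximum principle for the transport differential inequality with outgoing
characteristics at `z = ρ` (key step in the proof of Theorem 3.1): if
`G : [0,T] × [0,ρ] → ℝ` is `C¹` with `∂_z G ≥ 0`, and
`∂_t G ≤ a + b ∂_z G` with `b(t, ρ) ≤ 0`, then
`sup_z G(t, ·) ≤ sup_z G(0, ·) + ∫₀ᵗ sup_z a(s, ·) ds`. -/
theorem transport_maximum_principle (ρ T : ℝ) (hρ : 0 < ρ) (hT : 0 < T)
    (G Gt Gz a b : ℝ → ℝ → ℝ)
    (hGc : ContinuousOn (fun p : ℝ × ℝ => G p.1 p.2)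
      (Set.Icc (0 : ℝ) T ×ˢ Set.Icc (0 : ℝ) ρ))
    (hGt : ∀ t ∈ Set.Icc (0 : ℝ) T, ∀ z ∈ Set.Icc (0 : ℝ) ρ,
      HasDerivWithinAt (fun s => G s z) (Gt t z) (Set.Icc (0 : ℝ) T) t)
    (hGz : ∀ t ∈ Set.Icc (0 : ℝ) T, ∀ z ∈ Set.Icc (0 : ℝ) ρ,
      HasDerivWithinAt (fun w => G t w) (Gz t z) (Set.Icc (0 : ℝ) ρ) z)
    (hGtc : ContinuousOn (fun p : ℝ × ℝ => Gt p.1 p.2)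
      (Set.Icc (0 : ℝ) T ×ˢ Set.Icc (0 : ℝ) ρ))
    (hGzc : ContinuousOn (fun p : ℝ × ℝ => Gz p.1 p.2)
      (Set.Icc (0 : ℝ) T ×ˢ Set.Icc (0 : ℝ) ρ))
    (hac : ContinuousOn (fun p : ℝ × ℝ => a p.1 p.2)
      (Set.Icc (0 : ℝ) T ×ˢ Set.Icc (0 : ℝ) ρ))
    (hbc : ContinuousOn (fun p : ℝ × ℝ => b p.1 p.2)
      (Set.Icc (0 : ℝ) T ×ˢ Set.Icc (0 : ℝ) ρ))
    (hGz_nonneg : ∀ t ∈ Set.Icc (0 : ℝ) T, ∀ z ∈ Set.Icc (0 : ℝ) ρ,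
      0 ≤ Gz t z)
    (hineq : ∀ t ∈ Set.Icc (0 : ℝ) T, ∀ z ∈ Set.Icc (0 : ℝ) ρ,
      Gt t z ≤ a t z + b t z * Gz t z)
    (hout : ∀ t ∈ Set.Icc (0 : ℝ) T, b t ρ ≤ 0) :
    ∀ t ∈ Set.Icc (0 : ℝ) T,
      sSup (G t '' Set.Icc (0 : ℝ) ρ)
        ≤ sSup (G 0 '' Set.Icc (0 : ℝ) ρ) +
          ∫ s in (0 : ℝ)..t, sSup (a s '' Set.Icc (0 : ℝ) ρ) := by
  have hρmem : ρ ∈ Set.Icc (0 : ℝ) ρ := ⟨hρ.le, le_rfl⟩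
  -- G t is monotone in z, so the sup is attained at z = ρ
  have hmono : ∀ t ∈ Set.Icc (0 : ℝ) T, MonotoneOn (G t) (Set.Icc (0 : ℝ) ρ) := by
    intro t ht
    apply monotoneOn_of_deriv_nonneg (convex_Icc 0 ρ)
    · exact hGc.comp (by fun_prop) (fun z hz => Set.mk_mem_prod ht hz)
    · intro x hx
      rw [interior_Icc] at hx
      exact (((hGz t ht x (Set.Ioo_subset_Icc_self hx)).hasDerivAt
        (Icc_mem_nhds hx.1 hx.2)).differentiableAt).differentiableWithinAt
    · intro x hx
      rw [interior_Icc] at hx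
      rw [((hGz t ht x (Set.Ioo_subset_Icc_self hx)).hasDerivAt
        (Icc_mem_nhds hx.1 hx.2)).deriv]
      exact hGz_nonneg t ht x (Set.Ioo_subset_Icc_self hx)
  have hSupG : ∀ t ∈ Set.Icc (0 : ℝ) T, sSup (G t '' Set.Icc (0 : ℝ) ρ) = G t ρ := by
    intro t ht
    apply IsGreatest.csSup_eq
    refine ⟨Set.mem_image_of_mem _ hρmem, ?_⟩
    rintro y ⟨z, hz, rfl⟩
    exact hmono t ht hz hρmem hz.2
  -- continuity of the sup of a
  set A : ℝ → ℝ := fun s => sSup (a s '' Set.Icc (0 : ℝ) ρ) with hA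
  have hAc : ContinuousOn A (Set.Icc (0 : ℝ) T) := by
    rw [continuousOn_iff_continuous_restrict]
    have h1 : Continuous (↿(fun (s : Set.Icc (0 : ℝ) T) (z : Set.Icc (0 : ℝ) ρ) =>
        a s.1 z.1)) := by
      have : Continuous ((fun p : ℝ × ℝ => a p.1 p.2) ∘
          (fun p : Set.Icc (0 : ℝ) T × Set.Icc (0 : ℝ) ρ => ((p.1 : ℝ), (p.2 : ℝ)))) :=
        hac.comp_continuous (by fun_prop) (fun p => Set.mk_mem_prod p.1.2 p.2.2)
      exact this
    have h2 := (isCompact_univ (X := Set.Icc (0 : ℝ) ρ)).continuous_sSup h1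
    have h3 : ∀ s : Set.Icc (0 : ℝ) T,
        (fun z : Set.Icc (0 : ℝ) ρ => a s.1 z.1) '' Set.univ = a s.1 '' Set.Icc 0 ρ := by
      intro s
      rw [Set.image_univ]
      ext y
      constructor
      · rintro ⟨z, rfl⟩; exact ⟨z.1, z.2, rfl⟩
      · rintro ⟨z, hz, rfl⟩; exact ⟨⟨z, hz⟩, rfl⟩
    convert h2 with s
    simp only [Set.restrict_apply, hA]
    rw [← h3 s]
  intro t ht
  rw [hSupG t ht, hSupG 0 (Set.left_mem_Icc.2 hT.le)]
  have hsub : Set.Icc (0 : ℝ) t ⊆ Set.Icc (0 : ℝ) T := Set.Icc_subset_Icc le_rfl ht.2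
  -- pointwise bound Gt s ρ ≤ A s on [0, t]
  have hptw : ∀ s ∈ Set.Icc (0 : ℝ) t, Gt s ρ ≤ A s := by
    intro s hs
    have hsT := hsub hs
    have h1 : Gt s ρ ≤ a s ρ := by
      have := hineq s hsT ρ hρmem
      have h2 : b s ρ * Gz s ρ ≤ 0 :=
        mul_nonpos_of_nonpos_of_nonneg (hout s hsT) (hGz_nonneg s hsT ρ hρmem)
      linarith
    refine h1.trans (le_csSup ?_ (Set.mem_image_of_mem _ hρmem))
    exact IsCompact.bddAbove_image isCompact_Icc
      (hac.comp (by fun_prop) (fun z hz => Set.mk_mem_prod hsT hz))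
  -- integrability
  have hGtρc : ContinuousOn (fun s => Gt s ρ) (Set.Icc (0 : ℝ) t) :=
    (hGtc.comp (by fun_prop) (fun s hs => Set.mk_mem_prod (hsub hs) hρmem))
  have hGtint : IntervalIntegrable (fun s => Gt s ρ) volume 0 t :=
    hGtρc.intervalIntegrable_of_Icc ht.1
  have hAint : IntervalIntegrable A volume 0 t :=
    (hAc.mono hsub).intervalIntegrable_of_Icc ht.1
  -- FTC
  have hftc : ∫ s in (0 : ℝ)..t, Gt s ρ = G t ρ - G 0 ρ := by
    apply intervalIntegral.integral_eq_sub_of_hasDeriv_right_of_le ht.1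
    · exact hGc.comp (by fun_prop) (fun s hs => Set.mk_mem_prod (hsub hs) hρmem)
    · intro x hx
      exact ((hGt x (hsub (Set.Ioo_subset_Icc_self hx)) ρ hρmem).hasDerivAt
        (Icc_mem_nhds hx.1 (hx.2.trans_le ht.2))).hasDerivWithinAt
    · exact hGtint
  have hle : ∫ s in (0 : ℝ)..t, Gt s ρ ≤ ∫ s in (0 : ℝ)..t, A s :=
    intervalIntegral.integral_mono_on ht.1 hGtint hAint hptw
  rw [hftc] at hle
  linarith
end
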